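/- arXiv:1611.07185 — 3 statements merged into one kernel-verified Lean document; each statement's English description precedes it below -/
import Mathlib

section
/- Let G be a connected simple graph on n vertices with adjacency matrix A and vertex degrees d_1, ..., d_n. Then the spectral radius ρ(G) of A satisfies ρ(G) ≥ ((1/n) ∑_{i=1}^n d_i^2)^{1/2}. -/
/-!
Let `A` be the adjacency matrix and `𝟙` the all-ones vector, so that `A 𝟙` is the vector of
degrees. Expanding in an orthonormal eigenbasis of the symmetric matrix `A` gives
`∑ dᵢ² = ‖A 𝟙‖² ≤ (max |λ|)² ‖𝟙‖² = (max |λ|)² n`, and also `xᵀ A x ≤ ρ ‖x‖²`. Since `A` has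
nonnegative entries, `|xᵀ A x| ≤ |x|ᵀ A |x| ≤ ρ ‖x‖²`, which tested on an eigenvector gives
`|λ| ≤ ρ` for every eigenvalue `λ`; hence `max |λ| ≤ ρ`, and in particular `ρ ≥ 0`.
-/

open Module End Matrix
open scoped RealInnerProductSpace

namespace LinearMap.IsSymmetric

variable {E : Type*} [NormedAddCommGroup E] [InnerProductSpace ℝ E] [FiniteDimensional ℝ E]
  {T : E →ₗ[ℝ] E} {c : ℝ}

theorem inner_map_self_le (hT : T.IsSymmetric) (hc : ∀ μ, HasEigenvalue T μ → μ ≤ c) (x : E) :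
    ⟪T x, x⟫ ≤ c * ‖x‖ ^ 2 := by
  set b := hT.eigenvectorBasis rfl
  have hle i : hT.eigenvalues rfl i ≤ c := hc _ (hT.hasEigenvalue_eigenvalues rfl i)
  calc ⟪T x, x⟫ = ∑ i, hT.eigenvalues rfl i * (b.repr x i) ^ 2 := by
        rw [← b.repr.inner_map_map, PiLp.inner_apply]
        simp [b, hT.eigenvectorBasis_apply_self_apply, sq, mul_left_comm]
    _ ≤ ∑ i, c * (b.repr x i) ^ 2 :=
        Finset.sum_le_sum fun i _ => mul_le_mul_of_nonneg_right (hle i) (sq_nonneg _)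
    _ = c * ‖x‖ ^ 2 := by
        rw [← Finset.mul_sum, ← b.repr.norm_map, EuclideanSpace.norm_sq_eq]
        simp

theorem norm_map_sq_le (hT : T.IsSymmetric) (hc : ∀ μ, HasEigenvalue T μ → |μ| ≤ c) (x : E) :
    ‖T x‖ ^ 2 ≤ c ^ 2 * ‖x‖ ^ 2 := by
  set b := hT.eigenvectorBasis rfl
  have hle i : hT.eigenvalues rfl i ^ 2 ≤ c ^ 2 :=
    sq_le_sq.mpr ((hc _ (hT.hasEigenvalue_eigenvalues rfl i)).trans (le_abs_self c))
  calc ‖T x‖ ^ 2 = ∑ i, hT.eigenvalues rfl i ^ 2 * (b.repr x i) ^ 2 := by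
        rw [← b.repr.norm_map, EuclideanSpace.norm_sq_eq]
        simp [b, hT.eigenvectorBasis_apply_self_apply, mul_pow]
    _ ≤ ∑ i, c ^ 2 * (b.repr x i) ^ 2 :=
        Finset.sum_le_sum fun i _ => mul_le_mul_of_nonneg_right (hle i) (sq_nonneg _)
    _ = c ^ 2 * ‖x‖ ^ 2 := by
        rw [← Finset.mul_sum, ← b.repr.norm_map, EuclideanSpace.norm_sq_eq]
        simp

end LinearMap.IsSymmetric

namespace Matrix

variable {ι : Type*} [Fintype ι] {A : Matrix ι ι ℝ} {c : ℝ}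

theorem abs_dotProduct_mulVec_le_of_nonneg (hA : ∀ i j, 0 ≤ A i j) (x : ι → ℝ) :
    |x ⬝ᵥ A *ᵥ x| ≤ |x| ⬝ᵥ A *ᵥ |x| :=
  calc |x ⬝ᵥ A *ᵥ x| = |∑ i, ∑ j, x i * (A i j * x j)| := by
        simp only [dotProduct, mulVec, Finset.mul_sum]
    _ ≤ ∑ i, ∑ j, |x i * (A i j * x j)| :=
        (Finset.abs_sum_le_sum_abs _ _).trans
          (Finset.sum_le_sum fun i _ => Finset.abs_sum_le_sum_abs _ _)
    _ = |x| ⬝ᵥ A *ᵥ |x| := by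
        simp only [dotProduct, mulVec, Finset.mul_sum, abs_mul, abs_of_nonneg (hA _ _),
          Pi.abs_apply]

variable [DecidableEq ι]

theorem abs_le_of_hasEigenvalue_of_dotProduct_mulVec_le (hA : ∀ i j, 0 ≤ A i j)
    (hc : ∀ x, x ⬝ᵥ A *ᵥ x ≤ c * (x ⬝ᵥ x)) {μ : ℝ} (hμ : HasEigenvalue (toLin' A) μ) :
    |μ| ≤ c := by
  obtain ⟨v, hv, hv0⟩ := hμ.exists_hasEigenvector
  have hAv : A *ᵥ v = μ • v := by rwa [mem_eigenspace_iff, toLin'_apply] at hv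
  have hvv : |v| ⬝ᵥ |v| = v ⬝ᵥ v := by
    simp only [dotProduct, Pi.abs_apply, abs_mul_abs_self]
  have hpos : 0 < v ⬝ᵥ v := by simpa using dotProduct_self_star_pos_iff.mpr hv0
  refine le_of_mul_le_mul_right ?_ hpos
  calc |μ| * (v ⬝ᵥ v) = |v ⬝ᵥ A *ᵥ v| := by
        rw [hAv, dotProduct_smul, smul_eq_mul, abs_mul, abs_of_pos hpos]
    _ ≤ |v| ⬝ᵥ A *ᵥ |v| := abs_dotProduct_mulVec_le_of_nonneg hA v
    _ ≤ c * (v ⬝ᵥ v) := hvv ▸ hc |v|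

theorem hasEigenvalue_toEuclideanLin_iff {μ : ℝ} :
    HasEigenvalue (toEuclideanLin A) μ ↔ HasEigenvalue (toLin' A) μ := by
  simp only [hasEigenvalue_iff_mem_spectrum, spectrum_toLpLin, spectrum_toLin']

namespace IsHermitian

theorem abs_le_of_hasEigenvalue_of_nonneg (hA : A.IsHermitian) (hA₀ : ∀ i j, 0 ≤ A i j)
    (hc : ∀ μ, HasEigenvalue (toLin' A) μ → μ ≤ c) {μ : ℝ} (hμ : HasEigenvalue (toLin' A) μ) :
    |μ| ≤ c := by
  have hT := isSymmetric_toEuclideanLin_iff.mpr hA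
  refine abs_le_of_hasEigenvalue_of_dotProduct_mulVec_le hA₀ (fun x => ?_) hμ
  have := hT.inner_map_self_le (fun μ hμ => hc μ (hasEigenvalue_toEuclideanLin_iff.mp hμ))
    (WithLp.toLp 2 x)
  rw [← real_inner_self_eq_norm_sq, toLpLin_toLp, EuclideanSpace.inner_toLp_toLp,
    EuclideanSpace.inner_toLp_toLp] at this
  simpa only [toLin'_apply, star_trivial] using this

theorem mulVec_dotProduct_mulVec_le_of_nonneg (hA : A.IsHermitian) (hA₀ : ∀ i j, 0 ≤ A i j)
    (hc : ∀ μ, HasEigenvalue (toLin' A) μ → μ ≤ c) (x : ι → ℝ) :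
    (A *ᵥ x) ⬝ᵥ (A *ᵥ x) ≤ c ^ 2 * (x ⬝ᵥ x) := by
  have hT := isSymmetric_toEuclideanLin_iff.mpr hA
  have := hT.norm_map_sq_le (fun μ hμ => hA.abs_le_of_hasEigenvalue_of_nonneg hA₀ hc
    (hasEigenvalue_toEuclideanLin_iff.mp hμ)) (WithLp.toLp 2 x)
  rw [← real_inner_self_eq_norm_sq, ← real_inner_self_eq_norm_sq, toLpLin_toLp,
    EuclideanSpace.inner_toLp_toLp, EuclideanSpace.inner_toLp_toLp] at this
  simpa only [toLin'_apply, star_trivial] using this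

end IsHermitian

end Matrix

theorem stmt_5_general (n : ℕ) (G : SimpleGraph (Fin n)) [DecidableRel G.Adj] (ρ : ℝ)
    (hρ : IsGreatest {μ : ℝ | Module.End.HasEigenvalue
        (Matrix.toLin' (G.adjMatrix ℝ)) μ} ρ) :
    Real.sqrt ((1 / (n : ℝ)) * ∑ i, (G.degree i : ℝ) ^ 2) ≤ ρ := by
  have hA := G.isHermitian_adjMatrix ℝ
  have hA₀ : ∀ i j, 0 ≤ G.adjMatrix ℝ i j := fun i j => by
    rw [SimpleGraph.adjMatrix_apply]; positivity
  have hρ₀ : 0 ≤ ρ := (abs_nonneg ρ).trans (hA.abs_le_of_hasEigenvalue_of_nonneg hA₀ hρ.2 hρ.1)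
  have hdeg : G.adjMatrix ℝ *ᵥ Function.const _ 1 = fun i => (G.degree i : ℝ) := by
    ext i; rw [SimpleGraph.adjMatrix_mulVec_const_apply, mul_one]
  have hsum := hA.mulVec_dotProduct_mulVec_le_of_nonneg hA₀ hρ.2 (Function.const _ 1)
  rw [hdeg] at hsum
  simp only [dotProduct, Function.const_apply, mul_one, Finset.sum_const, Finset.card_univ,
    Fintype.card_fin, nsmul_eq_mul, ← sq, one_pow] at hsum
  rw [← Real.sqrt_sq hρ₀, one_div_mul_eq_div]
  exact Real.sqrt_le_sqrt (div_le_of_le_mul₀ n.cast_nonneg (sq_nonneg ρ) hsum)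

theorem stmt_5 (n : ℕ) (hn : 0 < n) (G : SimpleGraph (Fin n)) [DecidableRel G.Adj]
    (hG : G.Connected) (ρ : ℝ)
    (hρ : IsGreatest {μ : ℝ | Module.End.HasEigenvalue
        (Matrix.toLin' (G.adjMatrix ℝ)) μ} ρ) :
    Real.sqrt ((1 / (n : ℝ)) * ∑ i, (G.degree i : ℝ) ^ 2) ≤ ρ :=
  stmt_5_general n G ρ hρ
end

section
/- Let A be an order-r dimension-n tensor and B an order-r dimension-m tensor. If λ is an eigenvalue of A with eigenvector u (i.e., (Au)_i = λ u_i^{r-1} where (Au)_i = ∑_{i_2,...,i_r} a_{i i_2 ⋯ i_r} u_{i_2} ⋯ u_{i_r}) and μ is an eigenvalue of B with eigenvector v, then λμ is an eigenvalue of the direct (Kronecker) product A ⊗ B with eigenvector u ⊗ v, where (A⊗B)_{(i_1,j_1)⋯(i_r,j_r)} = a_{i_1⋯i_r} b_{j_1⋯j_r} and (u⊗v)_{(i,j)} = u_i v_j. -/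
/-- Direct (Kronecker) product of two order-`r` tensors. -/
def kron {α β : Type*} {r : ℕ} (A : (Fin r → α) → ℂ) (B : (Fin r → β) → ℂ) :
    (Fin r → α × β) → ℂ :=
  fun t => A (fun k => (t k).1) * B (fun k => (t k).2)

/-- Multilinear action of an order-`(r+1)` tensor on a vector:
`(Ax)_i = ∑_{i₂,…,i_{r+1}} a_{i i₂ ⋯ i_{r+1}} x_{i₂} ⋯ x_{i_{r+1}}`. -/
noncomputable def tact {α : Type*} [Fintype α] {r : ℕ} (A : (Fin (r + 1) → α) → ℂ)
    (x : α → ℂ) (i : α) : ℂ :=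
  ∑ s : Fin r → α, A (Fin.cons i s) * ∏ k, x (s k)

/-!
The Kronecker product of tensors factorises entrywise, and the product vector `u ⊗ v` is a
pure tensor, so each term of the sum defining `(A ⊗ B)(u ⊗ v)` splits as a product of a term
for `Au` and a term for `Bv`. Hence `(A ⊗ B)(u ⊗ v) = Au ⊗ Bv = λμ (u ⊗ v)^{[r]}`.
-/

open Finset

section Kronecker

variable {α β : Type*} {r : ℕ}

theorem kron_cons (A : (Fin (r + 1) → α) → ℂ) (B : (Fin (r + 1) → β) → ℂ) (p : α × β)
    (s : Fin r → α × β) :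
    kron A B (Fin.cons p s) =
      A (Fin.cons p.1 (Prod.fst ∘ s)) * B (Fin.cons p.2 (Prod.snd ∘ s)) :=
  congr_arg₂ (· * ·) (congrArg A (Fin.comp_cons Prod.fst p s))
    (congrArg B (Fin.comp_cons Prod.snd p s))

theorem tact_kron [Fintype α] [Fintype β] (A : (Fin (r + 1) → α) → ℂ)
    (B : (Fin (r + 1) → β) → ℂ) (u : α → ℂ) (v : β → ℂ) (p : α × β) :
    tact (kron A B) (fun q => u q.1 * v q.2) p = tact A u p.1 * tact B v p.2 := by
  simp only [tact, kron_cons, sum_mul_sum, prod_mul_distrib]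
  rw [← (Equiv.arrowProdEquivProdArrow (Fin r) (fun _ => α) (fun _ => β)).symm.sum_comp,
    Fintype.sum_prod_type]
  refine sum_congr rfl fun a _ => sum_congr rfl fun b _ => ?_
  simp only [Equiv.arrowProdEquivProdArrow, Equiv.coe_fn_symm_mk, Function.comp_def]
  ring

end Kronecker

theorem pure_tensor_ne_zero {α β M : Type*} [MulZeroClass M] [NoZeroDivisors M]
    {u : α → M} {v : β → M} (hu : u ≠ 0) (hv : v ≠ 0) :
    (fun p : α × β => u p.1 * v p.2) ≠ 0 := by
  obtain ⟨i, hi⟩ := Function.ne_iff.mp hu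
  obtain ⟨j, hj⟩ := Function.ne_iff.mp hv
  exact Function.ne_iff.mpr ⟨(i, j), mul_ne_zero hi hj⟩

theorem stmt_8 (n m r : ℕ) (A : (Fin (r + 1) → Fin n) → ℂ)
    (B : (Fin (r + 1) → Fin m) → ℂ) (lam mu : ℂ)
    (u : Fin n → ℂ) (v : Fin m → ℂ) (hu : u ≠ 0) (hv : v ≠ 0)
    (hA : ∀ i, tact A u i = lam * u i ^ r)
    (hB : ∀ j, tact B v j = mu * v j ^ r) :
    (fun p : Fin n × Fin m => u p.1 * v p.2) ≠ 0 ∧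
      ∀ p : Fin n × Fin m,
        tact (kron A B) (fun q : Fin n × Fin m => u q.1 * v q.2) p =
          (lam * mu) * (u p.1 * v p.2) ^ r := by
  refine ⟨pure_tensor_ne_zero hu hv, fun p => ?_⟩
  rw [tact_kron, hA, hB]
  ring
end

section
/- Suppose H is an r-uniform hypergraph on n vertices with r ≥ 3, with vertex degrees d_1, ..., d_n and spectral radius ρ(H) of its adjacency tensor. Then ρ(H) ≥ ((1/n) ∑_{i=1}^n d_i^{r/(r-1)})^{(r-1)/r}. -/
/-!
Test the variational characterisation of `ρ` on `w i = (x i ^ r + (r - 1) z ^ r) ^ (1/r)`, where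
`x i = d i ^ (1/(r-1))` and `n z ^ r = ∑ x i ^ r = ∑ d i ^ (r/(r-1)) =: S`, so that
`∑ w i ^ r = r S`. For an edge `e`, Hölder's inequality for the `r × r` array with `x c ^ r` on the
diagonal and `z ^ r` off it gives `(∑_{c ∈ e} x c) z ^ (r-1) ≤ ∏_{i ∈ e} w i`, while every edge
contributes `r ∏_{i ∈ e} w i` to `w^T (A w)`. Summing over the edges, and using
`∑_e ∑_{c ∈ e} x c = ∑ d i x i = S`, gives `r S z ^ (r-1) ≤ ρ r S`, where
`z ^ (r-1) = (S/n) ^ ((r-1)/r)`.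
-/

/-- Degree of a vertex in a hypergraph: the number of edges containing it. -/
def hDeg {V : Type*} [DecidableEq V] (E : Finset (Finset V)) (i : V) : ℕ :=
  (E.filter (fun e => i ∈ e)).card

/-- Adjacency tensor of an `r`-uniform hypergraph: entry `1/(r-1)!` on index tuples
whose underlying set is an edge, and `0` otherwise. -/
noncomputable def adjT {V : Type*} [DecidableEq V] (r : ℕ) (E : Finset (Finset V)) :
    (Fin r → V) → ℝ :=
  fun t => if Finset.image t Finset.univ ∈ E then 1 / ((r - 1).factorial : ℝ) else 0

/-- The quadratic-type form `x^T (T x) = ∑ t, T_t ∏ₖ x_{tₖ}` of an order-`r` tensor. -/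
noncomputable def form {V : Type*} [Fintype V] {r : ℕ} (T : (Fin r → V) → ℝ) (x : V → ℝ) : ℝ :=
  ∑ t : Fin r → V, T t * ∏ k, x (t k)

/-- Spectral radius of a nonnegative symmetric order-`r` tensor, via the variational
characterization: the supremum of `x^T (T x)` over nonnegative `x` with `∑ xᵢ^r = 1`. -/
noncomputable def specRad {V : Type*} [Fintype V] {r : ℕ}
    (T : (Fin r → V) → ℝ) : ℝ :=
  sSup {q : ℝ | ∃ x : V → ℝ, (∀ i, 0 ≤ x i) ∧ (∑ i, x i ^ r = 1) ∧ q = form T x}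

open Finset

lemma mul_rpow_inv_sub_one {d p : ℝ} (hd : 0 ≤ d) (hp : 1 < p) :
    d * d ^ (p - 1)⁻¹ = d ^ (p / (p - 1)) := by
  have hp1 : 0 < p - 1 := sub_pos.2 hp
  rw [← Real.rpow_one_add' hd (add_pos one_pos (inv_pos.2 hp1)).ne']
  congr 1
  field_simp
  ring

lemma rpow_inv_sub_one_pow {d : ℝ} (hd : 0 ≤ d) (r : ℕ) :
    (d ^ ((r : ℝ) - 1)⁻¹) ^ r = d ^ ((r : ℝ) / (r - 1)) := by
  rw [← Real.rpow_natCast, ← Real.rpow_mul hd, inv_mul_eq_div]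

lemma rpow_inv_natCast_pow_pred {y : ℝ} (hy : 0 ≤ y) {r : ℕ} (hr : r ≠ 0) :
    (y ^ (r⁻¹ : ℝ)) ^ (r - 1) = y ^ (((r : ℝ) - 1) / r) := by
  rw [← Real.rpow_natCast, ← Real.rpow_mul hy, Nat.cast_pred (Nat.pos_of_ne_zero hr),
    inv_mul_eq_div]

theorem sum_prod_rpow_le_prod_sum_rpow {ι κ : Type*} (s : Finset ι) (t : Finset κ)
    {a : ι → κ → ℝ} (ha : ∀ i ∈ s, ∀ c ∈ t, 0 ≤ a i c) (hA : ∀ i ∈ s, 0 < ∑ c ∈ t, a i c)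
    {p : ι → ℝ} (hp : ∀ i ∈ s, 0 ≤ p i) (hp1 : ∑ i ∈ s, p i = 1) :
    ∑ c ∈ t, ∏ i ∈ s, a i c ^ p i ≤ ∏ i ∈ s, (∑ c ∈ t, a i c) ^ p i := by
  set A : ι → ℝ := fun i => ∑ c ∈ t, a i c
  set P := ∏ i ∈ s, A i ^ p i
  have hAp : ∀ i ∈ s, 0 < A i ^ p i := fun i hi => Real.rpow_pos_of_pos (hA i hi) _
  have hnormalize : ∀ c ∈ t, ∏ i ∈ s, a i c ^ p i = P * ∏ i ∈ s, (a i c / A i) ^ p i := by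
    intro c hc
    rw [← prod_mul_distrib]
    refine prod_congr rfl fun i hi => ?_
    rw [Real.div_rpow (ha i hi c hc) (hA i hi).le, mul_div_cancel₀ _ (hAp i hi).ne']
  calc ∑ c ∈ t, ∏ i ∈ s, a i c ^ p i = P * ∑ c ∈ t, ∏ i ∈ s, (a i c / A i) ^ p i := by
        rw [mul_sum]; exact sum_congr rfl hnormalize
    _ ≤ P * ∑ c ∈ t, ∑ i ∈ s, p i * (a i c / A i) := by
        gcongr with c hc
        · exact (prod_pos hAp).le
        · exact Real.geom_mean_le_arith_mean_weighted s _ _ hp hp1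
            fun i hi => div_nonneg (ha i hi c hc) (hA i hi).le
    _ = P := by
        have hrow : ∀ i ∈ s, ∑ c ∈ t, p i * (a i c / A i) = p i := fun i hi => by
          rw [← mul_sum, ← sum_div, div_self (hA i hi).ne', mul_one]
        rw [sum_comm, sum_congr rfl hrow, hp1, mul_one]

section SpectralRadius

variable {V : Type*} [Fintype V] {r : ℕ}

lemma form_le_sum_abs (T : (Fin r → V) → ℝ) {x : V → ℝ} (hx : ∀ i, 0 ≤ x i)
    (hx1 : ∀ i, x i ≤ 1) : form T x ≤ ∑ t, |T t| := by
  refine sum_le_sum fun t _ => ?_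
  have hprod : 0 ≤ ∏ k, x (t k) := prod_nonneg fun k _ => hx _
  calc T t * ∏ k, x (t k) ≤ |T t| * ∏ k, x (t k) := by gcongr; exact le_abs_self _
    _ ≤ |T t| :=
        mul_le_of_le_one_right (abs_nonneg _) (prod_le_one (fun k _ => hx _) fun k _ => hx1 _)

lemma bddAbove_form_unitSphere (T : (Fin r → V) → ℝ) (hr : r ≠ 0) :
    BddAbove {q : ℝ | ∃ x : V → ℝ, (∀ i, 0 ≤ x i) ∧ (∑ i, x i ^ r = 1) ∧ q = form T x} := by
  refine ⟨∑ t, |T t|, ?_⟩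
  rintro _ ⟨x, hx, hx1, rfl⟩
  refine form_le_sum_abs T hx fun i => (pow_le_one_iff_of_nonneg (hx i) hr).1 ?_
  exact hx1 ▸ single_le_sum (fun j _ => pow_nonneg (hx j) r) (mem_univ i)

lemma form_le_specRad (T : (Fin r → V) → ℝ) (hr : r ≠ 0) {x : V → ℝ} (hx : ∀ i, 0 ≤ x i)
    (hx1 : ∑ i, x i ^ r = 1) : form T x ≤ specRad T :=
  le_csSup (bddAbove_form_unitSphere T hr) ⟨x, hx, hx1, rfl⟩

lemma form_smul (T : (Fin r → V) → ℝ) (c : ℝ) (x : V → ℝ) :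
    form T (c • x) = c ^ r * form T x := by
  simp only [form, Pi.smul_apply, smul_eq_mul, prod_mul_distrib, prod_const, card_univ,
    Fintype.card_fin, mul_sum]
  exact sum_congr rfl fun t _ => by ring

lemma form_le_specRad_mul (T : (Fin r → V) → ℝ) (hr : r ≠ 0) {x : V → ℝ}
    (hx : ∀ i, 0 ≤ x i) : form T x ≤ specRad T * ∑ i, x i ^ r := by
  set s := ∑ i, x i ^ r
  rcases (sum_nonneg fun i _ => pow_nonneg (hx i) r : 0 ≤ s).eq_or_lt with hs | hs
  · have hx0 : ∀ i, x i = 0 := fun i => pow_eq_zero_iff hr |>.1 <|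
      (sum_eq_zero_iff_of_nonneg fun j _ => pow_nonneg (hx j) r).1 hs.symm i (mem_univ i)
    rw [show s = 0 from hs.symm, mul_zero]
    simp [form, hx0, zero_pow hr]
  set c := s ^ (-(r : ℝ)⁻¹)
  have hc : c ^ r = s⁻¹ := by
    rw [← Real.rpow_natCast, ← Real.rpow_mul hs.le, neg_mul,
      inv_mul_cancel₀ (by exact_mod_cast hr), Real.rpow_neg_one]
  have hcx : form T (c • x) ≤ specRad T := by
    refine form_le_specRad T hr (fun i => mul_nonneg (by positivity) (hx i)) ?_
    simp only [Pi.smul_apply, smul_eq_mul, mul_pow, ← mul_sum, hc]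
    exact inv_mul_cancel₀ hs.ne'
  rw [form_smul, hc] at hcx
  rwa [inv_mul_le_iff₀ hs, mul_comm] at hcx

lemma specRad_nonneg [Nonempty V] {T : (Fin r → V) → ℝ} (hT : ∀ t, 0 ≤ T t) (hr : r ≠ 0) :
    0 ≤ specRad T := by
  classical
  obtain ⟨v⟩ := ‹Nonempty V›
  let x : V → ℝ := fun i => if i = v then 1 else 0
  have hx : ∀ i, 0 ≤ x i := fun i => by positivity
  refine le_trans ?_ (form_le_specRad T hr hx ?_)
  · exact sum_nonneg fun t _ => mul_nonneg (hT t) (prod_nonneg fun k _ => hx _)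
  · simp [x, ite_pow, zero_pow hr]

end SpectralRadius

section Hypergraph

variable {V : Type*} [DecidableEq V] {r : ℕ}

lemma adjT_nonneg (E : Finset (Finset V)) (t : Fin r → V) : 0 ≤ adjT r E t := by
  unfold adjT; split <;> positivity

lemma sum_mul_pow_le_prod_rpow (hr : 2 ≤ r) {e : Finset V} (he : e.card = r) {x : V → ℝ}
    (hx : ∀ i, 0 ≤ x i) {z : ℝ} (hz : 0 < z) :
    (∑ c ∈ e, x c) * z ^ (r - 1) ≤ ∏ i ∈ e, (x i ^ r + ((r : ℝ) - 1) * z ^ r) ^ (r⁻¹ : ℝ) := by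
  have hr0 : r ≠ 0 := by omega
  have hr1 : (1 : ℝ) < r := by exact_mod_cast hr
  let a : V → V → ℝ := fun i c => if i = c then x c ^ r else z ^ r
  have hrow : ∀ i ∈ e, ∑ c ∈ e, a i c = x i ^ r + ((r : ℝ) - 1) * z ^ r := by
    intro i hi
    rw [← add_sum_erase _ _ hi, sum_congr rfl fun c hc => if_neg (ne_of_mem_erase hc).symm,
      sum_const, card_erase_of_mem hi, he, nsmul_eq_mul, Nat.cast_pred (by omega)]
    simp [a]
  have hcol : ∀ c ∈ e, ∏ i ∈ e, a i c ^ (r⁻¹ : ℝ) = x c * z ^ (r - 1) := by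
    intro c hc
    have hoff : ∀ i ∈ e.erase c, a i c ^ (r⁻¹ : ℝ) = z := fun i hi => by
      simp only [a, if_neg (ne_of_mem_erase hi), Real.pow_rpow_inv_natCast hz.le hr0]
    rw [← mul_prod_erase _ _ hc, prod_congr rfl hoff, prod_const, card_erase_of_mem hc, he]
    simp only [a, if_pos, Real.pow_rpow_inv_natCast (hx c) hr0]
  have hholder := sum_prod_rpow_le_prod_sum_rpow e e (a := a) (p := fun _ => (r⁻¹ : ℝ))
    (fun i _ c _ => by dsimp only [a]; split; exacts [pow_nonneg (hx c) r, by positivity])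
    (fun i hi => by rw [hrow i hi]; nlinarith [pow_nonneg (hx i) r, pow_pos hz r])
    (fun _ _ => inv_nonneg.2 r.cast_nonneg) (by simp [he, hr0])
  rwa [sum_congr rfl hcol, prod_congr rfl fun i hi => by rw [hrow i hi], ← sum_mul] at hholder

variable [Fintype V]

lemma factorial_le_card_image_eq {e : Finset V} (he : e.card = r) :
    r.factorial ≤ #{t : Fin r → V | image t univ = e} := by
  have hcard : Fintype.card (Fin r ≃ e) = r.factorial := by
    rw [Fintype.card_equiv (e.equivFinOfCardEq he).symm, Fintype.card_fin]
  rw [← hcard, ← card_univ]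
  refine card_le_card_of_injOn (fun σ k => (σ k : V)) (fun σ _ => ?_) ?_
  · simp only [coe_filter, mem_univ, true_and, Set.mem_ofPred_eq]
    ext a
    simp only [mem_image, mem_univ, true_and]
    exact ⟨fun ⟨k, hk⟩ => hk ▸ (σ k).2, fun ha => ⟨σ.symm ⟨a, ha⟩, by simp⟩⟩
  · intro σ _ τ _ h
    exact Equiv.ext fun k => Subtype.ext (congrFun h k)

lemma form_adjT (E : Finset (Finset V)) (hE : ∀ e ∈ E, e.card = r) (w : V → ℝ) :
    form (adjT r E) w =
      ∑ e ∈ E, (#{t : Fin r → V | image t univ = e} / (r - 1).factorial : ℝ) * ∏ i ∈ e, w i := by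
  have hprod : ∀ t : Fin r → V, image t univ ∈ E → ∏ k, w (t k) = ∏ i ∈ image t univ, w i := by
    intro t ht
    refine (prod_image fun a _ b _ h => ?_).symm
    refine card_image_iff.1 ?_ (mem_coe.2 (mem_univ a)) (mem_coe.2 (mem_univ b)) h
    rw [hE _ ht, card_univ, Fintype.card_fin]
  calc form (adjT r E) w = ∑ t with image t univ ∈ E, adjT r E t * ∏ k, w (t k) := by
        rw [form, sum_filter_of_ne]
        intro t _ h
        by_contra ht
        simp [adjT, ht] at h
    _ = ∑ e ∈ E, ∑ t with image t univ = e, adjT r E t * ∏ k, w (t k) :=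
        (sum_fiberwise_eq_sum_filter _ _ _ _).symm
    _ = ∑ e ∈ E, ∑ t with image t univ = e, (1 / (r - 1).factorial : ℝ) * ∏ i ∈ e, w i := by
        refine sum_congr rfl fun e he => sum_congr rfl fun t ht => ?_
        have hte : image t univ = e := (mem_filter.1 ht).2
        rw [hprod t (hte ▸ he), hte]
        simp only [adjT, hte, he, if_true]
    _ = _ := by
        simp only [sum_const, nsmul_eq_mul]
        exact sum_congr rfl fun e _ => by ring

lemma card_mul_sum_prod_le_form_adjT (hr : 0 < r) (E : Finset (Finset V))
    (hE : ∀ e ∈ E, e.card = r) {w : V → ℝ} (hw : ∀ i, 0 ≤ w i) :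
    r * ∑ e ∈ E, ∏ i ∈ e, w i ≤ form (adjT r E) w := by
  rw [form_adjT E hE, mul_sum]
  refine sum_le_sum fun e he => mul_le_mul_of_nonneg_right ?_ (prod_nonneg fun i _ => hw i)
  rw [le_div_iff₀ (by positivity)]
  exact_mod_cast (Nat.mul_factorial_pred hr.ne').trans_le (factorial_le_card_image_eq (hE e he))

lemma sum_sum_eq_sum_hDeg_mul (E : Finset (Finset V)) (x : V → ℝ) :
    ∑ e ∈ E, ∑ c ∈ e, x c = ∑ i, (hDeg E i : ℝ) * x i := by
  rw [sum_comm' (s' := fun i => {e ∈ E | i ∈ e}) (t' := univ) (by simp)]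
  simp [hDeg]

lemma mul_sum_hDeg_mul_le_specRad_mul (hr : 2 ≤ r) (E : Finset (Finset V))
    (hE : ∀ e ∈ E, e.card = r) {x : V → ℝ} (hx : ∀ i, 0 ≤ x i) {z : ℝ} (hz : 0 < z) :
    r * ((∑ i, (hDeg E i : ℝ) * x i) * z ^ (r - 1)) ≤
      specRad (adjT r E) * (∑ i, x i ^ r + ((r : ℝ) - 1) * (Fintype.card V * z ^ r)) := by
  have hr1 : (1 : ℝ) ≤ r := by exact_mod_cast (by omega : 1 ≤ r)
  have hw : ∀ i, 0 ≤ x i ^ r + ((r : ℝ) - 1) * z ^ r := fun i =>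
    add_nonneg (pow_nonneg (hx i) r) (mul_nonneg (sub_nonneg.2 hr1) (pow_nonneg hz.le r))
  have hwr : ∑ i, ((x i ^ r + ((r : ℝ) - 1) * z ^ r) ^ (r⁻¹ : ℝ)) ^ r =
      ∑ i, x i ^ r + ((r : ℝ) - 1) * (Fintype.card V * z ^ r) := by
    rw [sum_congr rfl fun i _ => Real.rpow_inv_natCast_pow (hw i) (by omega), sum_add_distrib,
      sum_const, card_univ, nsmul_eq_mul]
    ring
  calc (r : ℝ) * ((∑ i, (hDeg E i : ℝ) * x i) * z ^ (r - 1))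
      = r * ∑ e ∈ E, (∑ c ∈ e, x c) * z ^ (r - 1) := by rw [← sum_sum_eq_sum_hDeg_mul, sum_mul]
    _ ≤ r * ∑ e ∈ E, ∏ i ∈ e, (x i ^ r + ((r : ℝ) - 1) * z ^ r) ^ (r⁻¹ : ℝ) := by
        gcongr with e he
        exact sum_mul_pow_le_prod_rpow hr (hE e he) hx hz
    _ ≤ form (adjT r E) fun i => (x i ^ r + ((r : ℝ) - 1) * z ^ r) ^ (r⁻¹ : ℝ) :=
        card_mul_sum_prod_le_form_adjT (by omega) E hE fun i => Real.rpow_nonneg (hw i) _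
    _ ≤ _ := hwr ▸ form_le_specRad_mul _ (by omega) fun i => Real.rpow_nonneg (hw i) _

end Hypergraph

theorem stmt_15 (n r : ℕ) (hn : 0 < n) (hr : 3 ≤ r)
    (E : Finset (Finset (Fin n))) (hE : ∀ e ∈ E, e.card = r) :
    ((1 / (n : ℝ)) * ∑ i, (hDeg E i : ℝ) ^ ((r : ℝ) / ((r : ℝ) - 1)))
        ^ (((r : ℝ) - 1) / (r : ℝ)) ≤ specRad (adjT r E) := by
  have hr0 : r ≠ 0 := by omega
  have hr1 : (1 : ℝ) < r := by exact_mod_cast (by omega : 1 < r)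
  have hd : ∀ i, 0 ≤ (hDeg E i : ℝ) := fun i => Nat.cast_nonneg _
  set S := ∑ i, (hDeg E i : ℝ) ^ ((r : ℝ) / ((r : ℝ) - 1))
  by_cases hS0 : S = 0
  · have : Nonempty (Fin n) := ⟨⟨0, hn⟩⟩
    rw [hS0, mul_zero, Real.zero_rpow (div_pos (sub_pos.2 hr1) (by positivity)).ne']
    exact specRad_nonneg (adjT_nonneg E) hr0
  have hS : 0 < S := (sum_nonneg fun i _ => Real.rpow_nonneg (hd i) _).lt_of_ne' hS0
  set z := (S / n) ^ (r⁻¹ : ℝ)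
  have hzr : (n : ℝ) * z ^ r = S := by
    rw [Real.rpow_inv_natCast_pow (by positivity) hr0]
    field_simp
  have key := mul_sum_hDeg_mul_le_specRad_mul (by omega) E hE
    (fun i => Real.rpow_nonneg (hd i) ((r : ℝ) - 1)⁻¹) (by positivity : 0 < z)
  simp only [mul_rpow_inv_sub_one (hd _) hr1, rpow_inv_sub_one_pow (hd _), Fintype.card_fin,
    hzr] at key
  rw [one_div_mul_eq_div, ← rpow_inv_natCast_pow_pred (by positivity) hr0]
  refine le_of_mul_le_mul_left ?_ (by positivity : (0 : ℝ) < r * S)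
  linarith
end
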